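/- arXiv:2106.10903 — 5 statements merged into one kernel-verified Lean document; each statement's English description precedes it below -/
import Mathlib

section
/- Let q = 2^m with m ≥ 5 odd. For any 5-subset B of U_{q+1} (the set of (q+1)-th roots of unity in GF(q^2)), the elementary symmetric polynomial σ_{5,2}(B) is nonzero. -/
open Finset

/-- The `l`-th elementary symmetric polynomial evaluated on a finite set `B`. -/
noncomputable def esym {F : Type*} [CommRing F] (B : Finset F) (l : ℕ) : F :=
  ∑ s ∈ B.powersetCard l, ∏ x ∈ s, x

/-- The set of `n`-th roots of unity. -/
def rootsSet (F : Type*) [Monoid F] (n : ℕ) : Set F := {u | u ^ n = 1}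

private lemma esym_zero {F : Type*} [CommRing F] (s : Finset F) : esym s 0 = 1 := by
  simp [esym]

private lemma esym_empty {F : Type*} [CommRing F] {n : ℕ} (hn : 0 < n) :
    esym (∅ : Finset F) n = 0 := by
  rw [esym, show (∅ : Finset F).powersetCard n = ∅ by simp [hn], Finset.sum_empty]

private lemma esym_insert {F : Type*} [CommRing F] [DecidableEq F] {a : F} {s : Finset F}
    (h : a ∉ s) (n : ℕ) :
    esym (insert a s) (n + 1) = esym s (n + 1) + a * esym s n := by
  have hdisj : Disjoint (s.powersetCard (n + 1)) ((s.powersetCard n).image (insert a)) := by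
    rw [Finset.disjoint_left]
    intro t ht htimg
    rw [Finset.mem_powersetCard] at ht
    obtain ⟨u, hu, rfl⟩ := Finset.mem_image.mp htimg
    exact h (ht.1 (Finset.mem_insert_self a u))
  have hinj : ∀ t1 ∈ s.powersetCard n, ∀ t2 ∈ s.powersetCard n,
      insert a t1 = insert a t2 → t1 = t2 := by
    intro t1 h1 t2 h2 heq
    rw [Finset.mem_powersetCard] at h1 h2
    have n1 : a ∉ t1 := fun hc => h (h1.1 hc)
    have n2 : a ∉ t2 := fun hc => h (h2.1 hc)
    rw [← Finset.erase_insert n1, ← Finset.erase_insert n2, heq]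
  rw [esym, Finset.powersetCard_succ_insert h, Finset.sum_union hdisj, Finset.sum_image hinj,
    esym, esym, Finset.mul_sum]
  congr 1
  refine Finset.sum_congr rfl fun t ht => ?_
  rw [Finset.mem_powersetCard] at ht
  rw [Finset.prod_insert (fun hc => h (ht.1 hc))]

private lemma esym_insert_one {F : Type*} [CommRing F] [DecidableEq F] {a : F} {s : Finset F}
    (h : a ∉ s) : esym (insert a s) 1 = esym s 1 + a * esym s 0 :=
  esym_insert h 0

private lemma esym_insert_two {F : Type*} [CommRing F] [DecidableEq F] {a : F} {s : Finset F}
    (h : a ∉ s) : esym (insert a s) 2 = esym s 2 + a * esym s 1 :=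
  esym_insert h 1

set_option maxHeartbeats 1000000 in
theorem stmt0 (m : ℕ) (hm : 5 ≤ m) (hodd : Odd m)
    (B : Finset (GaloisField 2 (2 * m)))
    (hBU : ↑B ⊆ rootsSet (GaloisField 2 (2 * m)) (2 ^ m + 1))
    (hB : B.card = 5) :
    esym B 2 ≠ 0 := by
  classical
  set F := GaloisField 2 (2 * m) with hFdef
  intro hc
  obtain ⟨a, t1, ha1, rfl, ht1⟩ := Finset.card_eq_succ.mp hB
  obtain ⟨b, t2, hb2, rfl, ht2⟩ := Finset.card_eq_succ.mp ht1
  obtain ⟨c, t3, hc3, rfl, ht3⟩ := Finset.card_eq_succ.mp ht2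
  obtain ⟨d, t4, hd4, rfl, ht4⟩ := Finset.card_eq_succ.mp ht3
  obtain ⟨e, t5, he5, rfl, ht5⟩ := Finset.card_eq_succ.mp ht4
  rw [Finset.card_eq_zero] at ht5
  subst ht5
  -- basic distinctness facts we need
  have had : a ≠ d := fun h => ha1 (by rw [h]; simp)
  have hbc : b ≠ c := fun h => hb2 (by rw [h]; simp)
  -- roots of unity facts
  have hua : a ^ (2 ^ m + 1) = 1 := hBU (by simp)
  have hub : b ^ (2 ^ m + 1) = 1 := hBU (by simp)
  have huc : c ^ (2 ^ m + 1) = 1 := hBU (by simp)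
  have hud : d ^ (2 ^ m + 1) = 1 := hBU (by simp)
  have hue : e ^ (2 ^ m + 1) = 1 := hBU (by simp)
  have hne : ∀ x : F, x ^ (2 ^ m + 1) = 1 → x ≠ 0 := by
    intro x hx h
    rw [h, zero_pow (by positivity)] at hx
    exact zero_ne_one hx
  have ha0 := hne a hua
  have hb0 := hne b hub
  have hc0 := hne c huc
  have hd0 := hne d hud
  have he0 := hne e hue
  have hinva : a ^ (2 ^ m) = a⁻¹ := eq_inv_of_mul_eq_one_left (by rw [← pow_succ]; exact hua)
  have hinvb : b ^ (2 ^ m) = b⁻¹ := eq_inv_of_mul_eq_one_left (by rw [← pow_succ]; exact hub)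
  have hinvc : c ^ (2 ^ m) = c⁻¹ := eq_inv_of_mul_eq_one_left (by rw [← pow_succ]; exact huc)
  have hinvd : d ^ (2 ^ m) = d⁻¹ := eq_inv_of_mul_eq_one_left (by rw [← pow_succ]; exact hud)
  have hinve : e ^ (2 ^ m) = e⁻¹ := eq_inv_of_mul_eq_one_left (by rw [← pow_succ]; exact hue)
  have h0 : (2 : F) = 0 := CharTwo.two_eq_zero
  have hadd : ∀ x y : F, (x + y) ^ (2 ^ m) = x ^ (2 ^ m) + y ^ (2 ^ m) := fun x y =>
    add_pow_char_pow x y 2 m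
  -- expand esym B 2
  have L1 : esym (insert e (∅ : Finset F)) 1 = e := by
    rw [esym_insert_one (Finset.notMem_empty e), esym_empty Nat.one_pos, esym_zero]; ring
  have L2 : esym (insert e (∅ : Finset F)) 2 = 0 := by
    rw [esym_insert_two (Finset.notMem_empty e), esym_empty (by norm_num : (0:ℕ) < 2),
      esym_empty Nat.one_pos]; ring
  have L3 : esym (insert d (insert e (∅ : Finset F))) 1 = d + e := by
    rw [esym_insert_one hd4, L1, esym_zero]; ring
  have L4 : esym (insert d (insert e (∅ : Finset F))) 2 = d * e := by
    rw [esym_insert_two hd4, L2, L1]; ring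
  have L5 : esym (insert c (insert d (insert e (∅ : Finset F)))) 1 = c + d + e := by
    rw [esym_insert_one hc3, L3, esym_zero]; ring
  have L6 : esym (insert c (insert d (insert e (∅ : Finset F)))) 2 = c*d + c*e + d*e := by
    rw [esym_insert_two hc3, L4, L3]; ring
  have L7 : esym (insert b (insert c (insert d (insert e (∅ : Finset F))))) 1 = b + c + d + e := by
    rw [esym_insert_one hb2, L5, esym_zero]; ring
  have L8 : esym (insert b (insert c (insert d (insert e (∅ : Finset F))))) 2
      = b*c + b*d + b*e + c*d + c*e + d*e := by
    rw [esym_insert_two hb2, L6, L5]; ring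
  rw [esym_insert_two ha1, L8, L7] at hc
  have hσ2 : a*b + a*c + a*d + a*e + b*c + b*d + b*e + c*d + c*e + d*e = 0 := by
    linear_combination hc
  -- derive σ₃ = 0 via Frobenius
  have hpows : (a*b + a*c + a*d + a*e + b*c + b*d + b*e + c*d + c*e + d*e) ^ (2 ^ m)
      = a⁻¹*b⁻¹ + a⁻¹*c⁻¹ + a⁻¹*d⁻¹ + a⁻¹*e⁻¹ + b⁻¹*c⁻¹ + b⁻¹*d⁻¹ + b⁻¹*e⁻¹ + c⁻¹*d⁻¹
        + c⁻¹*e⁻¹ + d⁻¹*e⁻¹ := by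
    simp only [hadd, mul_pow, hinva, hinvb, hinvc, hinvd, hinve]
  have hXzero : a⁻¹*b⁻¹ + a⁻¹*c⁻¹ + a⁻¹*d⁻¹ + a⁻¹*e⁻¹ + b⁻¹*c⁻¹ + b⁻¹*d⁻¹ + b⁻¹*e⁻¹ + c⁻¹*d⁻¹
      + c⁻¹*e⁻¹ + d⁻¹*e⁻¹ = 0 := by
    rw [← hpows, hσ2]
    exact zero_pow (by positivity)
  have ia := inv_mul_cancel₀ ha0
  have ib := inv_mul_cancel₀ hb0
  have ic := inv_mul_cancel₀ hc0
  have id' := inv_mul_cancel₀ hd0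
  have ie' := inv_mul_cancel₀ he0
  have hkey : (a⁻¹*b⁻¹ + a⁻¹*c⁻¹ + a⁻¹*d⁻¹ + a⁻¹*e⁻¹ + b⁻¹*c⁻¹ + b⁻¹*d⁻¹ + b⁻¹*e⁻¹ + c⁻¹*d⁻¹
      + c⁻¹*e⁻¹ + d⁻¹*e⁻¹) * (a*b*c*d*e)
      = a*b*c + a*b*d + a*b*e + a*c*d + a*c*e + a*d*e + b*c*d + b*c*e + b*d*e + c*d*e := by
    calc (a⁻¹*b⁻¹ + a⁻¹*c⁻¹ + a⁻¹*d⁻¹ + a⁻¹*e⁻¹ + b⁻¹*c⁻¹ + b⁻¹*d⁻¹ + b⁻¹*e⁻¹ + c⁻¹*d⁻¹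
      + c⁻¹*e⁻¹ + d⁻¹*e⁻¹) * (a*b*c*d*e)
        = (a⁻¹*a)*(b⁻¹*b)*(c*d*e) + (a⁻¹*a)*(c⁻¹*c)*(b*d*e) + (a⁻¹*a)*(d⁻¹*d)*(b*c*e)
          + (a⁻¹*a)*(e⁻¹*e)*(b*c*d) + (b⁻¹*b)*(c⁻¹*c)*(a*d*e) + (b⁻¹*b)*(d⁻¹*d)*(a*c*e)
          + (b⁻¹*b)*(e⁻¹*e)*(a*c*d) + (c⁻¹*c)*(d⁻¹*d)*(a*b*e) + (c⁻¹*c)*(e⁻¹*e)*(a*b*d)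
          + (d⁻¹*d)*(e⁻¹*e)*(a*b*c) := by ring
      _ = a*b*c + a*b*d + a*b*e + a*c*d + a*c*e + a*d*e + b*c*d + b*c*e + b*d*e + c*d*e := by
          rw [ia, ib, ic, id', ie']; ring
  have hσ3 : a*b*c + a*b*d + a*b*e + a*c*d + a*c*e + a*d*e + b*c*d + b*c*e + b*d*e + c*d*e
      = 0 := by
    rw [← hkey, hXzero, zero_mul]
  -- the two resolvent elements have equal cubes
  have hcube : (a*b + c*d + e*(a+b+c+d))^3 = (a*c + b*d + e*(a+b+c+d))^3 := by
    linear_combination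
      (((a*b+c*d)^2 - (a*c+b*d)^2) + e*(a+b+c+d)*((a*b+c*d)-(a*c+b*d))) * hσ2
      - (a+b+c+d)*((a*b+c*d)-(a*c+b*d)) * hσ3
      + (e*(a+b+c+d)*((a*b+c*d)^2-(a*c+b*d)^2)
        + ((e*(a+b+c+d))^2 + 2*(a*b*c*d))*((a*b+c*d)-(a*c+b*d))) * h0
  -- Frobenius twist of ρ₁ and ρ₂
  have hφρ1 : (a*b + c*d + e*(a+b+c+d)) ^ (2 ^ m)
      = a⁻¹*b⁻¹ + c⁻¹*d⁻¹ + e⁻¹*(a⁻¹+b⁻¹+c⁻¹+d⁻¹) := by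
    simp only [hadd, mul_pow, hinva, hinvb, hinvc, hinvd, hinve]
  have hφρ2 : (a*c + b*d + e*(a+b+c+d)) ^ (2 ^ m)
      = a⁻¹*c⁻¹ + b⁻¹*d⁻¹ + e⁻¹*(a⁻¹+b⁻¹+c⁻¹+d⁻¹) := by
    simp only [hadd, mul_pow, hinva, hinvb, hinvc, hinvd, hinve]
  have hkey1 : (a⁻¹*b⁻¹ + c⁻¹*d⁻¹ + e⁻¹*(a⁻¹+b⁻¹+c⁻¹+d⁻¹)) * (a*b*c*d*e)
      = c*d*e + a*b*e + (b*c*d + a*c*d + a*b*d + a*b*c) := by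
    calc (a⁻¹*b⁻¹ + c⁻¹*d⁻¹ + e⁻¹*(a⁻¹+b⁻¹+c⁻¹+d⁻¹)) * (a*b*c*d*e)
        = (a⁻¹*a)*(b⁻¹*b)*(c*d*e) + (c⁻¹*c)*(d⁻¹*d)*(a*b*e) + (e⁻¹*e)*(a⁻¹*a)*(b*c*d)
          + (e⁻¹*e)*(b⁻¹*b)*(a*c*d) + (e⁻¹*e)*(c⁻¹*c)*(a*b*d) + (e⁻¹*e)*(d⁻¹*d)*(a*b*c) := by
          ring
      _ = c*d*e + a*b*e + (b*c*d + a*c*d + a*b*d + a*b*c) := by rw [ia, ib, ic, id', ie']; ring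
  have hkey2 : (a⁻¹*c⁻¹ + b⁻¹*d⁻¹ + e⁻¹*(a⁻¹+b⁻¹+c⁻¹+d⁻¹)) * (a*b*c*d*e)
      = b*d*e + a*c*e + (b*c*d + a*c*d + a*b*d + a*b*c) := by
    calc (a⁻¹*c⁻¹ + b⁻¹*d⁻¹ + e⁻¹*(a⁻¹+b⁻¹+c⁻¹+d⁻¹)) * (a*b*c*d*e)
        = (a⁻¹*a)*(c⁻¹*c)*(b*d*e) + (b⁻¹*b)*(d⁻¹*d)*(a*c*e) + (e⁻¹*e)*(a⁻¹*a)*(b*c*d)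
          + (e⁻¹*e)*(b⁻¹*b)*(a*c*d) + (e⁻¹*e)*(c⁻¹*c)*(a*b*d) + (e⁻¹*e)*(d⁻¹*d)*(a*b*c) := by
          ring
      _ = b*d*e + a*c*e + (b*c*d + a*c*d + a*b*d + a*b*c) := by rw [ia, ib, ic, id', ie']; ring
  have htw1 : (a*b + c*d + e*(a+b+c+d)) ^ (2 ^ m) * (a*b*c*d*e)
      = (a*b + c*d + e*(a+b+c+d)) * e := by
    rw [hφρ1, hkey1]
    linear_combination hσ3 - e * hσ2
  have htw2 : (a*c + b*d + e*(a+b+c+d)) ^ (2 ^ m) * (a*b*c*d*e)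
      = (a*c + b*d + e*(a+b+c+d)) * e := by
    rw [hφρ2, hkey2]
    linear_combination hσ3 - e * hσ2
  have habcde : (a*b*c*d*e : F) ≠ 0 :=
    mul_ne_zero (mul_ne_zero (mul_ne_zero (mul_ne_zero ha0 hb0) hc0) hd0) he0
  have hcross : (a*b + c*d + e*(a+b+c+d)) ^ (2 ^ m) * (a*c + b*d + e*(a+b+c+d))
      = (a*c + b*d + e*(a+b+c+d)) ^ (2 ^ m) * (a*b + c*d + e*(a+b+c+d)) := by
    have h1 : (a*b + c*d + e*(a+b+c+d)) ^ (2 ^ m) * (a*c + b*d + e*(a+b+c+d)) * (a*b*c*d*e)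
        = (a*c + b*d + e*(a+b+c+d)) ^ (2 ^ m) * (a*b + c*d + e*(a+b+c+d)) * (a*b*c*d*e) := by
      linear_combination (a*c + b*d + e*(a+b+c+d)) * htw1 - (a*b + c*d + e*(a+b+c+d)) * htw2
    exact mul_right_cancel₀ habcde h1
  -- ρ₁ ≠ ρ₂
  have hρneq : (a*b + c*d + e*(a+b+c+d)) ≠ (a*c + b*d + e*(a+b+c+d)) := by
    intro h
    have h2 : (a - d) * (b - c) = 0 := by linear_combination h
    rcases mul_eq_zero.mp h2 with h3 | h3
    · exact had (by linear_combination h3)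
    · exact hbc (by linear_combination h3)
  -- ρ₂ ≠ 0 and ρ₁ ≠ 0
  have hr2ne : (a*c + b*d + e*(a+b+c+d)) ≠ 0 := by
    intro h
    apply hρneq
    have h1 : (a*b + c*d + e*(a+b+c+d))^3 = 0 := by rw [hcube, h]; ring
    rw [pow_eq_zero_iff (by norm_num : (3:ℕ) ≠ 0)] at h1
    rw [h1, h]
  have hr1ne : (a*b + c*d + e*(a+b+c+d)) ≠ 0 := by
    intro h
    apply hρneq
    have h1 : (a*c + b*d + e*(a+b+c+d))^3 = 0 := by rw [← hcube, h]; ring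
    rw [pow_eq_zero_iff (by norm_num : (3:ℕ) ≠ 0)] at h1
    rw [h1, h]
  set r1 : F := a*b + c*d + e*(a+b+c+d) with hr1def
  set r2 : F := a*c + b*d + e*(a+b+c+d) with hr2def
  clear_value r1 r2
  -- 2^m = 3k + 2 since m is odd
  obtain ⟨k, hk⟩ : ∃ k, 2 ^ m = 3 * k + 2 := by
    obtain ⟨j, rfl⟩ := hodd
    have h4 : ∀ j : ℕ, ∃ l, 4 ^ j = 3 * l + 1 := by
      intro j
      induction j with
      | zero => exact ⟨0, rfl⟩
      | succ n ih =>
        obtain ⟨l, hl⟩ := ih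
        exact ⟨4*l + 1, by rw [pow_succ, hl]; ring⟩
    obtain ⟨l, hl⟩ := h4 j
    refine ⟨2*l, ?_⟩
    have h5 : (2:ℕ) ^ (2*j + 1) = 4 ^ j * 2 := by
      rw [pow_succ, pow_mul]; norm_num
    rw [h5, hl]; ring
  -- final contradiction
  have hstep : (r2^3)^k * (r1^2 * r2) = (r2^3)^k * (r2^2 * r1) := by
    calc (r2^3)^k * (r1^2 * r2) = r1 ^ (2 ^ m) * r2 := by rw [hk, ← hcube]; ring
      _ = r2 ^ (2 ^ m) * r1 := hcross
      _ = (r2^3)^k * (r2^2 * r1) := by rw [hk]; ring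
  have hr12 : r1^2 * r2 = r2^2 * r1 :=
    mul_left_cancel₀ (pow_ne_zero k (pow_ne_zero 3 hr2ne)) hstep
  have h5 : r1 * r2 * (r1 - r2) = 0 := by linear_combination hr12
  rcases mul_eq_zero.mp h5 with h6 | h6
  · rcases mul_eq_zero.mp h6 with h7 | h7
    · exact hr1ne h7
    · exact hr2ne h7
  · exact hρneq (by linear_combination h6)
end

section
/- Let q be a power of 2 and let B = {u_1,...,u_k} be a k-subset of U_{q+1}. Then for any l ≤ k, σ_{k,k-l}(B) = σ_{k,k}(B) · σ_{k,l}(B)^q. In particular, for k = 5, σ_{5,3}(B) = σ_{5,5}(B) · σ_{5,2}(B)^q, so σ_{5,3}(B) = 0 if and only if σ_{5,2}(B) = 0. -/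
open Finset

lemma key (m k l : ℕ) (hlk : l ≤ k)
    (B : Finset (GaloisField 2 (2 * m)))
    (hBU : ↑B ⊆ rootsSet (GaloisField 2 (2 * m)) (2 ^ m + 1))
    (hBk : B.card = k) :
    esym B (k - l) = esym B k * (esym B l) ^ (2 ^ m) := by
  classical
  have hne : ∀ x ∈ B, x ≠ 0 := by
    intro x hx hx0
    have h1 : x ^ (2 ^ m + 1) = 1 := hBU hx
    rw [hx0, zero_pow (by positivity)] at h1
    exact zero_ne_one h1
  have hinv : ∀ x ∈ B, x ^ (2 ^ m) = x⁻¹ := by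
    intro x hx
    have h1 : x ^ (2 ^ m) * x = 1 := by
      rw [← pow_succ]; exact hBU hx
    exact eq_inv_of_mul_eq_one_left h1
  have hk : esym B k = ∏ x ∈ B, x := by
    rw [esym, ← hBk, powersetCard_self, sum_singleton]
  have hl : (esym B l) ^ (2 ^ m) = ∑ s ∈ B.powersetCard l, ∏ x ∈ s, x⁻¹ := by
    rw [esym, ← iterateFrobenius_def (p := 2), map_sum]
    refine Finset.sum_congr rfl fun s hs => ?_
    rw [map_prod]
    refine Finset.prod_congr rfl fun x hx => ?_
    rw [iterateFrobenius_def]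
    exact hinv x ((mem_powersetCard.mp hs).1 hx)
  rw [hk, hl, Finset.mul_sum]
  rw [esym]
  refine Finset.sum_nbij' (fun s => B \ s) (fun s => B \ s) ?_ ?_ ?_ ?_ ?_
  · intro s hs
    rw [mem_powersetCard] at hs ⊢
    exact ⟨sdiff_subset, by rw [card_sdiff_of_subset hs.1, hBk, hs.2]; omega⟩
  · intro s hs
    rw [mem_powersetCard] at hs ⊢
    exact ⟨sdiff_subset, by rw [card_sdiff_of_subset hs.1, hBk, hs.2]⟩
  · intro s hs
    rw [mem_powersetCard] at hs
    exact Finset.sdiff_sdiff_eq_self hs.1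
  · intro s hs
    rw [mem_powersetCard] at hs
    exact Finset.sdiff_sdiff_eq_self hs.1
  · intro s hs
    rw [mem_powersetCard] at hs
    have h1 : ∏ x ∈ B \ s, (x * x⁻¹) = 1 :=
      Finset.prod_eq_one fun x hx => mul_inv_cancel₀ (hne x (mem_sdiff.mp hx).1)
    calc ∏ x ∈ s, x = (∏ x ∈ B \ s, (x * x⁻¹)) * ∏ x ∈ s, x := by rw [h1, one_mul]
      _ = (∏ x ∈ B, x) * ∏ x ∈ B \ s, x⁻¹ := by
          rw [Finset.prod_mul_distrib, ← Finset.prod_sdiff hs.1]; ring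

theorem stmt1 (m : ℕ) (hm : 1 ≤ m) (k l : ℕ) (hlk : l ≤ k)
    (B : Finset (GaloisField 2 (2 * m)))
    (hBU : ↑B ⊆ rootsSet (GaloisField 2 (2 * m)) (2 ^ m + 1))
    (hBk : B.card = k) :
    esym B (k - l) = esym B k * (esym B l) ^ (2 ^ m) ∧
      (k = 5 → (esym B 3 = 0 ↔ esym B 2 = 0)) := by
  refine ⟨key m k l hlk B hBU hBk, fun hk5 => ?_⟩
  subst hk5
  have h := key m 5 2 (by norm_num) B hBU hBk
  norm_num at h
  have h5 : esym B 5 ≠ 0 := by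
    rw [esym, ← hBk, powersetCard_self, sum_singleton]
    exact Finset.prod_ne_zero_iff.mpr fun x hx hx0 => by
      have h1 : x ^ (2 ^ m + 1) = 1 := hBU hx
      rw [hx0, zero_pow (by positivity)] at h1
      exact zero_ne_one h1
  rw [h, mul_eq_zero, pow_eq_zero_iff (by positivity)]
  tauto
end

section
/- Let q be a power of 2 and B a 5-subset of U_{q+1} with σ_{5,2}(B) = 0. Then for every u ∈ U_{q+1}, the third elementary symmetric polynomial of the multiset B ∪ {u} (six elements, counted with multiplicity) equals 0, i.e., σ_{6,3}(B ⊎ {u}) = σ_{5,3}(B) + u·σ_{5,2}(B) = 0. -/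
open Finset

lemma esym_eq_esymm {F : Type*} [CommRing F] (B : Finset F) (l : ℕ) :
    esym B l = Multiset.esymm B.val l := by
  have := Finset.esymm_map_val (id : F → F) B l
  simp only [Multiset.map_id] at this
  simp [esym, this]

lemma esymm_cons {F : Type*} [CommRing F] (u : F) (s : Multiset F) (n : ℕ) :
    Multiset.esymm (u ::ₘ s) (n + 1) =
      Multiset.esymm s (n + 1) + u * Multiset.esymm s n := by
  simp only [Multiset.esymm, Multiset.powersetCard_cons, Multiset.map_add, Multiset.sum_add,
    Multiset.map_map, Function.comp_def, Multiset.prod_cons]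
  rw [Multiset.sum_map_mul_left]

theorem stmt2 (m : ℕ) (hm : 1 ≤ m)
    (B : Finset (GaloisField 2 (2 * m)))
    (hBU : ↑B ⊆ rootsSet (GaloisField 2 (2 * m)) (2 ^ m + 1))
    (hB : B.card = 5) (h52 : esym B 2 = 0)
    (u : GaloisField 2 (2 * m))
    (hu : u ∈ rootsSet (GaloisField 2 (2 * m)) (2 ^ m + 1)) :
    Multiset.esymm (u ::ₘ B.val) 3 = esym B 3 + u * esym B 2 ∧
      Multiset.esymm (u ::ₘ B.val) 3 = 0 := by
  classical
  have key : Multiset.esymm (u ::ₘ B.val) 3 = esym B 3 + u * esym B 2 := by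
    rw [esym_eq_esymm, esym_eq_esymm]
    exact esymm_cons u B.val 2
  -- elements of B are nonzero and satisfy x ^ (2^m+1) = 1
  have hroot : ∀ x ∈ B, x ^ (2 ^ m + 1) = 1 := fun x hx => hBU (Finset.mem_coe.mpr hx)
  have hne : ∀ x ∈ B, x ≠ 0 := by
    intro x hx h0
    have := hroot x hx
    rw [h0, zero_pow (Nat.succ_ne_zero _)] at this
    exact one_ne_zero this.symm
  -- Frobenius: x ↦ x ^ 2 ^ m is a ring hom
  have hexp : ExpChar (GaloisField 2 (2 * m)) 2 := ExpChar.prime Nat.prime_two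
  let φ : GaloisField 2 (2 * m) →+* GaloisField 2 (2 * m) := iterateFrobenius (GaloisField 2 (2 * m)) 2 m
  have hφdef : ∀ x : GaloisField 2 (2 * m), φ x = x ^ 2 ^ m := fun x => iterateFrobenius_def 2 m x
  -- key identity : esym B 3 = (∏ x ∈ B, x) * φ (esym B 2)
  have hmain : esym B 3 = (∏ x ∈ B, x) * φ (esym B 2) := by
    rw [esym, esym, map_sum, Finset.mul_sum]
    refine Finset.sum_bij' (fun t _ => B \ t) (fun s _ => B \ s) ?_ ?_ ?_ ?_ ?_
    · intro t ht
      rw [Finset.mem_powersetCard] at ht ⊢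
      exact ⟨Finset.sdiff_subset, by rw [Finset.card_sdiff_of_subset ht.1, hB, ht.2]⟩
    · intro s hs
      rw [Finset.mem_powersetCard] at hs ⊢
      exact ⟨Finset.sdiff_subset, by rw [Finset.card_sdiff_of_subset hs.1, hB, hs.2]⟩
    · intro t ht
      rw [Finset.mem_powersetCard] at ht
      exact Finset.sdiff_sdiff_eq_self ht.1
    · intro s hs
      rw [Finset.mem_powersetCard] at hs
      exact Finset.sdiff_sdiff_eq_self hs.1
    · intro t ht
      rw [Finset.mem_powersetCard] at ht
      have hsub : B \ t ⊆ B := Finset.sdiff_subset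
      -- φ (∏ x ∈ B \ t, x) = (∏ x ∈ B \ t, x)⁻¹
      have hp1 : (∏ x ∈ B \ t, x) ^ (2 ^ m + 1) = 1 := by
        rw [← Finset.prod_pow]
        exact Finset.prod_eq_one fun x hx => hroot x (hsub hx)
      have hpn : (∏ x ∈ B \ t, x) ≠ 0 :=
        Finset.prod_ne_zero_iff.2 fun x hx => hne x (hsub hx)
      have hφp : φ (∏ x ∈ B \ t, x) = (∏ x ∈ B \ t, x)⁻¹ := by
        rw [hφdef]
        field_simp
        rw [← pow_succ]
        exact hp1
      rw [hφp]
      have hps : (∏ x ∈ B \ t, x) * (∏ x ∈ t, x) = ∏ x ∈ B, x :=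
        Finset.prod_sdiff ht.1
      field_simp
      linear_combination hps
  refine ⟨key, ?_⟩
  rw [key, h52, hmain, h52, map_zero, mul_zero, mul_zero, add_zero]
end

section
/- Let q = 2^m and B = {u_1, u_2, u_3, u_4} ⊆ U_{q+1} a 4-subset. If a ∈ U_{q+1} satisfies σ_{4,2}(B) + a·σ_{4,1}(B) = 0, then a ∉ B. -/
/-!
Write `B = {a, b, c, d}`. In characteristic 2, `σ₂(B) + a σ₁(B) = a² + (bc + bd + cd)`, so the
hypothesis says `a² = bc + bd + cd`. On `U_{q+1}` the Frobenius `x ↦ x^q` is inversion; applying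
it gives `a⁻² = (b + c + d) / (bcd)`, i.e. `bcd = a²(b + c + d) = (bc + bd + cd)(b + c + d)`.
But `(b + c + d)(bc + bd + cd) - bcd = (b + c)(b + d)(c + d)`, so two of `b, c, d` coincide.
-/

open Finset

section Esym

variable {R : Type*} [CommRing R]

lemma esym_eq_esymm_val (s : Finset R) (n : ℕ) : esym s n = s.val.esymm n := by
  simpa [esym] using (Finset.esymm_map_val id s n).symm

variable [DecidableEq R]

lemma esym_insert_succ {a : R} {s : Finset R} (h : a ∉ s) (n : ℕ) :
    esym (insert a s) (n + 1) = esym s (n + 1) + a * esym s n := by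
  simp only [esym_eq_esymm_val, insert_val_of_notMem h, Multiset.esymm,
    Multiset.powersetCard_cons, Multiset.map_add, Multiset.sum_add, Multiset.map_map,
    Function.comp_def, Multiset.prod_cons, Multiset.sum_map_mul_left]

lemma esym_insert_two_add_mul_esym_insert_one [CharP R 2] {a : R} {s : Finset R} (h : a ∉ s) :
    esym (insert a s) 2 + a * esym (insert a s) 1 = esym s 2 + a ^ 2 := by
  rw [esym_insert_succ h, esym_insert_succ h, esym_eq_esymm_val s 0, Multiset.esymm,
    Multiset.powersetCard_zero_left, Multiset.map_singleton, Multiset.prod_zero,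
    Multiset.sum_singleton]
  linear_combination (a * esym s 1) * CharTwo.two_eq_zero (R := R)

lemma esym_triple_two {b c d : R} (hbc : b ≠ c) (hbd : b ≠ d) (hcd : c ≠ d) :
    esym {b, c, d} 2 = b * c + b * d + c * d := by
  rw [esym_insert_succ (by simp [hbc, hbd]), esym_eq_esymm_val, esym_eq_esymm_val,
    insert_val_of_notMem (by simpa using hcd), singleton_val, Multiset.esymm_pair_two,
    Multiset.esymm_pair_one]
  ring

end Esym

lemma pow_eq_inv_of_pow_succ_eq_one {G : Type*} [GroupWithZero G] {x : G} {n : ℕ}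
    (h : x ^ (n + 1) = 1) : x ^ n = x⁻¹ :=
  eq_inv_of_mul_eq_one_left (by rwa [← pow_succ])

section CharTwo

variable {F : Type*} [Field F] [CharP F 2] {m : ℕ}

lemma mul_mul_eq_sq_mul_of_sq_eq {a b c d : F} (ha : a ∈ rootsSet F (2 ^ m + 1))
    (hb : b ∈ rootsSet F (2 ^ m + 1)) (hc : c ∈ rootsSet F (2 ^ m + 1))
    (hd : d ∈ rootsSet F (2 ^ m + 1)) (h : a ^ 2 = b * c + b * d + c * d) :
    b * c * d = a ^ 2 * (b + c + d) := by
  have hconj := congrArg (iterateFrobenius F 2 m) h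
  simp only [map_add, map_mul, map_pow, iterateFrobenius_def,
    pow_eq_inv_of_pow_succ_eq_one ha, pow_eq_inv_of_pow_succ_eq_one hb,
    pow_eq_inv_of_pow_succ_eq_one hc, pow_eq_inv_of_pow_succ_eq_one hd] at hconj
  have h0 : ∀ {x : F}, x ∈ rootsSet F (2 ^ m + 1) → x ≠ 0 := fun hx h0 => by
    simp [rootsSet, h0] at hx
  field_simp [h0 ha, h0 hb, h0 hc, h0 hd] at hconj
  linear_combination hconj

lemma eq_or_eq_or_eq_of_sq_eq_esym_two {a b c d : F} (ha : a ∈ rootsSet F (2 ^ m + 1))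
    (hb : b ∈ rootsSet F (2 ^ m + 1)) (hc : c ∈ rootsSet F (2 ^ m + 1))
    (hd : d ∈ rootsSet F (2 ^ m + 1)) (h : a ^ 2 = b * c + b * d + c * d) :
    b = c ∨ b = d ∨ c = d := by
  have hprod : (b + c) * (b + d) * (c + d) = 0 := by
    linear_combination -(b + c + d) * h - mul_mul_eq_sq_mul_of_sq_eq ha hb hc hd h
  simpa only [mul_eq_zero, CharTwo.add_eq_zero, or_assoc] using hprod

end CharTwo

theorem stmt3_general (m : ℕ)
    (B : Finset (GaloisField 2 (2 * m)))
    (hBU : ↑B ⊆ rootsSet (GaloisField 2 (2 * m)) (2 ^ m + 1))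
    (hB : B.card = 4)
    (a : GaloisField 2 (2 * m))
    (ha : a ∈ rootsSet (GaloisField 2 (2 * m)) (2 ^ m + 1))
    (heq : esym B 2 + a * esym B 1 = 0) :
    a ∉ B := by
  classical
  intro haB
  obtain ⟨b, c, d, hbc, hbd, hcd, hrest⟩ :=
    card_eq_three.mp (show (B.erase a).card = 3 by rw [card_erase_of_mem haB, hB])
  rw [← insert_erase haB, esym_insert_two_add_mul_esym_insert_one (notMem_erase a B), hrest,
    esym_triple_two hbc hbd hcd, add_comm, CharTwo.add_eq_zero] at heq
  have hU : ∀ x ∈ ({b, c, d} : Finset _), x ∈ rootsSet _ (2 ^ m + 1) := fun x hx =>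
    hBU (mem_of_mem_erase (hrest ▸ hx))
  rcases eq_or_eq_or_eq_of_sq_eq_esym_two ha (hU b (by simp)) (hU c (by simp)) (hU d (by simp))
    heq with h | h | h
  exacts [hbc h, hbd h, hcd h]

theorem stmt3 (m : ℕ) (hm : 1 ≤ m)
    (B : Finset (GaloisField 2 (2 * m)))
    (hBU : ↑B ⊆ rootsSet (GaloisField 2 (2 * m)) (2 ^ m + 1))
    (hB : B.card = 4)
    (a : GaloisField 2 (2 * m))
    (ha : a ∈ rootsSet (GaloisField 2 (2 * m)) (2 ^ m + 1))
    (heq : esym B 2 + a * esym B 1 = 0) :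
    a ∉ B :=
  stmt3_general m B hBU hB a ha heq
end

section
/- Let q = 2^m and let B = {u_1,...,u_7} be a 7-subset of U_{q+1}. If a ∈ U_{q+1} satisfies σ_{7,3}(B) + a·σ_{7,2}(B) + a²·σ_{7,1}(B) + a³ = 0, then a ∈ B. -/
open Finset

/-!
The `q`-th power map `φ` is a ring endomorphism with `u * φ u = 1` on `U_{q+1}`, so with
`P = ∏ B` one has `P * φ (σ_l) = σ_{7-l}`: the polynomial `∏ (X + b)` is self-reciprocal.
Its upper half `σ_4 a³ + … + σ_7` is therefore `P · a³ · φ(cubic)`, and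
`∏ (a + b) = a⁴ · cubic + P · a³ · φ(cubic) = 0`, so `a = b` for some `b ∈ B` in characteristic 2.
-/

lemma Finset.sum_powersetCard_card_sub {α M : Type*} [DecidableEq α] [AddCommMonoid M]
    (B : Finset α) (f : Finset α → M) {l : ℕ} (hl : l ≤ #B) :
    ∑ t ∈ B.powersetCard (#B - l), f t = ∑ s ∈ B.powersetCard l, f (B \ s) := by
  refine (sum_nbij' (B \ ·) (B \ ·) ?_ ?_ ?_ ?_ fun _ _ => rfl).symm
  · intro s hs
    rw [mem_powersetCard] at hs ⊢
    exact ⟨sdiff_subset, by rw [card_sdiff_of_subset hs.1, hs.2]⟩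
  · intro t ht
    rw [mem_powersetCard] at ht ⊢
    exact ⟨sdiff_subset, by rw [card_sdiff_of_subset ht.1, ht.2]; omega⟩
  · intro s hs
    exact sdiff_sdiff_eq_self (mem_powersetCard.mp hs).1
  · intro t ht
    exact sdiff_sdiff_eq_self (mem_powersetCard.mp ht).1

section

variable {R : Type*} [CommRing R]

lemma esym_eq_esymm_s4 (B : Finset R) (l : ℕ) : esym B l = B.val.esymm l := by
  rw [esym]
  simpa using (Finset.esymm_map_val id B l).symm

@[simp]
lemma esym_zero_s4 (B : Finset R) : esym B 0 = 1 := by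
  simp [esym]

lemma prod_add_eq_sum_esym (B : Finset R) (a : R) :
    ∏ b ∈ B, (a + b) = ∑ j ∈ range (#B + 1), esym B j * a ^ (#B - j) := by
  have h := congrArg (Polynomial.eval a) B.val.prod_X_add_C_eq_sum_esymm
  rw [Polynomial.eval_multiset_prod, Polynomial.eval_finsetSum, Multiset.map_map] at h
  simp only [Function.comp_def, Polynomial.eval_add, Polynomial.eval_X, Polynomial.eval_C,
    Polynomial.eval_mul, Polynomial.eval_pow] at h
  simpa [esym_eq_esymm_s4] using h

lemma map_esym {S : Type*} [CommRing S] (φ : R →+* S) (B : Finset R) (l : ℕ) :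
    φ (esym B l) = ∑ s ∈ B.powersetCard l, ∏ x ∈ s, φ x := by
  simp only [esym, map_sum, map_prod]

lemma prod_mul_map_esym (φ : R →+* R) {B : Finset R} (hB : ∀ b ∈ B, b * φ b = 1) {l : ℕ}
    (hl : l ≤ #B) : (∏ b ∈ B, b) * φ (esym B l) = esym B (#B - l) := by
  classical
  rw [map_esym, mul_sum, esym, sum_powersetCard_card_sub B _ hl]
  refine sum_congr rfl fun s hs => ?_
  have hsB := (mem_powersetCard.mp hs).1
  have hs_inv : (∏ x ∈ s, x) * ∏ x ∈ s, φ x = 1 := by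
    rw [← prod_mul_distrib]
    exact prod_eq_one fun x hx => hB x (hsB hx)
  rw [← prod_sdiff hsB, mul_assoc, hs_inv, mul_one]

theorem mem_of_esym_cubic_eq_zero [IsDomain R] [CharP R 2] (φ : R →+* R) {B : Finset R}
    (hB : #B = 7) (hBφ : ∀ b ∈ B, b * φ b = 1) {a : R} (ha : a * φ a = 1)
    (heq : esym B 3 + a * esym B 2 + a ^ 2 * esym B 1 + a ^ 3 = 0) : a ∈ B := by
  have hrecip : a ^ 3 * φ (esym B 3) + a ^ 2 * φ (esym B 2) + a * φ (esym B 1) + 1 = 0 := by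
    have h := congrArg φ heq
    simp only [map_add, map_mul, map_pow, map_zero] at h
    linear_combination a ^ 3 * h - (φ (esym B 2) * a ^ 2 + φ (esym B 1) * a * (a * φ a + 1)
      + ((a * φ a) ^ 2 + a * φ a + 1)) * ha
  have hself_recip (l : ℕ) (hl : l ≤ 7) : (∏ b ∈ B, b) * φ (esym B l) = esym B (7 - l) :=
    hB ▸ prod_mul_map_esym φ hBφ (hB ▸ hl)
  have hprod : ∏ b ∈ B, (a + b) = 0 := by
    rw [prod_add_eq_sum_esym, hB]
    simp only [sum_range_succ, range_zero, sum_empty, zero_add, esym_zero_s4, one_mul, Nat.reduceSub,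
      ← hself_recip 0 (by norm_num), ← hself_recip 1 (by norm_num), ← hself_recip 2 (by norm_num),
      ← hself_recip 3 (by norm_num), map_one]
    linear_combination a ^ 4 * heq + (∏ b ∈ B, b) * hrecip
  obtain ⟨b, hb, hab⟩ := prod_eq_zero_iff.mp hprod
  exact CharTwo.add_eq_zero.mp hab ▸ hb

end

theorem stmt4_general (m : ℕ)
    (B : Finset (GaloisField 2 (2 * m)))
    (hBU : ↑B ⊆ rootsSet (GaloisField 2 (2 * m)) (2 ^ m + 1))
    (hB : B.card = 7)
    (a : GaloisField 2 (2 * m))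
    (ha : a ∈ rootsSet (GaloisField 2 (2 * m)) (2 ^ m + 1))
    (heq : esym B 3 + a * esym B 2 + a ^ 2 * esym B 1 + a ^ 3 = 0) :
    a ∈ B := by
  have hroot : ∀ x ∈ rootsSet (GaloisField 2 (2 * m)) (2 ^ m + 1),
      x * iterateFrobenius (GaloisField 2 (2 * m)) 2 m x = 1 := fun x hx => by
    rw [iterateFrobenius_def, ← pow_succ']
    exact hx
  exact mem_of_esym_cubic_eq_zero _ hB (fun b hb => hroot b (hBU hb)) (hroot a ha) heq

theorem stmt4 (m : ℕ) (hm : 1 ≤ m)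
    (B : Finset (GaloisField 2 (2 * m)))
    (hBU : ↑B ⊆ rootsSet (GaloisField 2 (2 * m)) (2 ^ m + 1))
    (hB : B.card = 7)
    (a : GaloisField 2 (2 * m))
    (ha : a ∈ rootsSet (GaloisField 2 (2 * m)) (2 ^ m + 1))
    (heq : esym B 3 + a * esym B 2 + a ^ 2 * esym B 1 + a ^ 3 = 0) :
    a ∈ B :=
  stmt4_general m B hBU hB a ha heq
end
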